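/- arXiv:2106.09363 — 4 statements merged into one kernel-verified Lean document; each statement's English description precedes it below -/
import Mathlib

section
/- Let x_1, …, x_n and y_1, …, y_n be points in ℝ^d, assume the matrix [y_1 … y_n] has full rank d, and let j_1, …, j_d be d indices maximizing the absolute value of the determinant of [y_{j_1} … y_{j_d}] over all choices of d indices. Let i_1, …, i_d be d distinct indices, let R and R̃ be arbitrary d×d orthogonal matrices, and let π be a permutation of {1,…,n} with π(i_k) = j_k for all k = 1,…,d. Define δ = sqrt(Σ_{k=1}^d ‖x_{i_k} − R y_{π(i_k)}‖_2²) and δ̃ = sqrt(Σ_{k=1}^d ‖x_{i_k} − R̃ y_{π(i_k)}‖_2²). Then for every l ∈ {1,…,n}, ‖(R − R̃) y_l‖_2 ≤ √d · (δ̃ + δ). -/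
/-! By Cramer's rule, the coefficients of any `y l` in the basis `y (j 0), …, y (j (d-1))` are
ratios of determinants of column selections to the maximal one, so they have absolute value at
most `1` and `‖(R - Rt) y l‖ ≤ ∑ k ‖(R - Rt) y (j k)‖`. Cauchy–Schwarz bounds this sum by `√d`
times the `ℓ²`-norm of the family `(R - Rt) y (j k) = (x (i k) - Rt y (j k)) - (x (i k) - R y (j k))`,
and Minkowski's inequality bounds that norm by `δt + δ`. -/

open scoped BigOperators Matrix

/-- Euclidean norm on `ℝ^d` (vectors as functions `Fin d → ℝ`). -/
noncomputable def vnorm {d : ℕ} (v : Fin d → ℝ) : ℝ :=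
  Real.sqrt (∑ a, (v a) ^ 2)

/-- The matrix with columns `y (j 0), …, y (j (d-1))`. -/
noncomputable def colMatrix {n d : ℕ} (y : Fin n → Fin d → ℝ) (j : Fin d → Fin n) :
    Matrix (Fin d) (Fin d) ℝ :=
  Matrix.of fun a b => y (j b) a

lemma vnorm_eq_norm_toLp {d : ℕ} (v : Fin d → ℝ) : vnorm v = ‖WithLp.toLp 2 v‖ := by
  simp [vnorm, EuclideanSpace.norm_eq, Real.norm_eq_abs, sq_abs]

lemma vnorm_sum_smul_le {ι : Type*} [Fintype ι] {d : ℕ} (c : ι → ℝ) (v : ι → Fin d → ℝ)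
    (hc : ∀ k, |c k| ≤ 1) : vnorm (∑ k, c k • v k) ≤ ∑ k, vnorm (v k) := by
  simp only [vnorm_eq_norm_toLp, WithLp.toLp_sum, WithLp.toLp_smul]
  refine (norm_sum_le _ _).trans (Finset.sum_le_sum fun k _ => ?_)
  rw [norm_smul, Real.norm_eq_abs]
  exact mul_le_of_le_one_left (norm_nonneg _) (hc k)

lemma sqrt_sum_vnorm_sub_sq_le {ι : Type*} [Fintype ι] {d : ℕ} (u v : ι → Fin d → ℝ) :
    √(∑ k, vnorm (u k - v k) ^ 2) ≤ √(∑ k, vnorm (u k) ^ 2) + √(∑ k, vnorm (v k) ^ 2) := by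
  let toL2 (w : ι → Fin d → ℝ) : PiLp 2 (fun _ : ι => EuclideanSpace ℝ (Fin d)) :=
    WithLp.toLp 2 fun k => WithLp.toLp 2 (w k)
  have hnorm (w : ι → Fin d → ℝ) : ‖toL2 w‖ = √(∑ k, vnorm (w k) ^ 2) := by
    simp [toL2, PiLp.norm_eq_of_L2, vnorm_eq_norm_toLp]
  have hsub : toL2 (u - v) = toL2 u - toL2 v := rfl
  simpa [hnorm, ← hsub] using norm_sub_le (toL2 u) (toL2 v)

lemma sum_le_sqrt_card_mul_sqrt_sum_sq {ι : Type*} [Fintype ι] (f : ι → ℝ) :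
    ∑ k, f k ≤ √(Fintype.card ι) * √(∑ k, f k ^ 2) := by
  rw [← Real.sqrt_mul (Nat.cast_nonneg _)]
  refine Real.le_sqrt_of_sq_le ?_
  simpa using sq_sum_le_card_mul_sum_sq (s := Finset.univ) (f := f)

lemma span_range_eq_top_of_rank_eq {n d : ℕ} (y : Fin n → Fin d → ℝ)
    (hrank : (Matrix.of fun (a : Fin d) (b : Fin n) => y b a).rank = d) :
    Submodule.span ℝ (Set.range y) = ⊤ := by
  apply Submodule.eq_top_of_finrank_eq
  rw [Module.finrank_fin_fun]
  exact (Matrix.rank_eq_finrank_span_cols _).symm.trans hrank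

lemma exists_colMatrix_det_ne_zero {n d : ℕ} (y : Fin n → Fin d → ℝ)
    (hspan : Submodule.span ℝ (Set.range y) = ⊤) : ∃ j, (colMatrix y j).det ≠ 0 := by
  obtain ⟨κ, a, -, haspan, hali⟩ := exists_linearIndependent' ℝ y
  let B := Module.Basis.mk hali (haspan.trans hspan).ge
  let e : κ ≃ Fin d := B.indexEquiv (Pi.basisFun ℝ (Fin d))
  refine ⟨a ∘ e.symm, ?_⟩
  rw [← isUnit_iff_ne_zero, ← Matrix.isUnit_iff_isUnit_det,
    ← Matrix.linearIndependent_cols_iff_isUnit]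
  exact hali.comp e.symm e.symm.injective

lemma exists_coeffs_abs_le_one_of_maximal_det {n d : ℕ} (y : Fin n → Fin d → ℝ)
    (j : Fin d → Fin n) (hj : ∀ j' : Fin d → Fin n, |(colMatrix y j').det| ≤ |(colMatrix y j).det|)
    (hdet : (colMatrix y j).det ≠ 0) (l : Fin n) :
    ∃ c : Fin d → ℝ, (∀ k, |c k| ≤ 1) ∧ y l = ∑ k, c k • y (j k) := by
  set M := colMatrix y j
  refine ⟨M.det⁻¹ • M.cramer (y l), fun k => ?_, ?_⟩
  · have hupdate : M.updateCol k (y l) = colMatrix y (Function.update j k l) := by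
      ext a b
      by_cases hbk : b = k <;> simp [M, colMatrix, hbk]
    rw [Pi.smul_apply, smul_eq_mul, abs_mul, abs_inv, inv_mul_le_iff₀ (abs_pos.2 hdet), mul_one,
      Matrix.cramer_apply, hupdate]
    exact hj _
  · have hcol : ∀ c : Fin d → ℝ, M *ᵥ c = ∑ k, c k • y (j k) := fun c => by
      simp only [Matrix.mulVec_eq_sum, op_smul_eq_smul]; rfl
    rw [← hcol, Matrix.mulVec_smul, Matrix.mulVec_cramer, smul_smul, inv_mul_cancel₀ hdet,
      one_smul]

lemma vnorm_mulVec_le_sum_of_maximal_det {n d m : ℕ} (y : Fin n → Fin d → ℝ)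
    (hrank : (Matrix.of fun (a : Fin d) (b : Fin n) => y b a).rank = d)
    (j : Fin d → Fin n) (hj : ∀ j' : Fin d → Fin n, |(colMatrix y j').det| ≤ |(colMatrix y j).det|)
    (D : Matrix (Fin m) (Fin d) ℝ) (l : Fin n) :
    vnorm (D *ᵥ y l) ≤ ∑ k, vnorm (D *ᵥ y (j k)) := by
  obtain ⟨j', hj'⟩ := exists_colMatrix_det_ne_zero y (span_range_eq_top_of_rank_eq y hrank)
  have hdet : (colMatrix y j).det ≠ 0 := fun h => hj' (abs_eq_zero.1 (by simpa [h] using hj j'))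
  obtain ⟨c, hc, hyl⟩ := exists_coeffs_abs_le_one_of_maximal_det y j hj hdet l
  rw [hyl, Matrix.mulVec_sum]
  simp only [Matrix.mulVec_smul]
  exact vnorm_sum_smul_le c _ hc

theorem stmt1_general {n d : ℕ} (x y : Fin n → Fin d → ℝ)
    (hrank : (Matrix.of fun (a : Fin d) (b : Fin n) => y b a).rank = d)
    (j : Fin d → Fin n)
    (hj : ∀ j' : Fin d → Fin n,
      |(colMatrix y j').det| ≤ |(colMatrix y j).det|)
    (i : Fin d → Fin n)
    (R Rt : Matrix (Fin d) (Fin d) ℝ)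
    (σ : Equiv.Perm (Fin n)) (hσ : ∀ k : Fin d, σ (i k) = j k)
    (δ δt : ℝ)
    (hδ : δ = Real.sqrt (∑ k : Fin d, (vnorm (x (i k) - R.mulVec (y (σ (i k)))))^2))
    (hδt : δt = Real.sqrt (∑ k : Fin d, (vnorm (x (i k) - Rt.mulVec (y (σ (i k)))))^2)) :
    ∀ l : Fin n, vnorm ((R - Rt).mulVec (y l)) ≤ Real.sqrt d * (δt + δ) := by
  intro l
  have hresidual : √(∑ k, vnorm ((R - Rt) *ᵥ y (j k)) ^ 2) ≤ δt + δ := by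
    simp only [hδ, hδt, hσ]
    convert sqrt_sum_vnorm_sub_sq_le (fun k => x (i k) - Rt *ᵥ y (j k))
      (fun k => x (i k) - R *ᵥ y (j k)) using 5
    rw [Matrix.sub_mulVec]
    abel
  calc vnorm ((R - Rt) *ᵥ y l) ≤ ∑ k, vnorm ((R - Rt) *ᵥ y (j k)) :=
        vnorm_mulVec_le_sum_of_maximal_det y hrank j hj (R - Rt) l
    _ ≤ √d * √(∑ k, vnorm ((R - Rt) *ᵥ y (j k)) ^ 2) := by
        simpa using sum_le_sqrt_card_mul_sqrt_sum_sq fun k => vnorm ((R - Rt) *ᵥ y (j k))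
    _ ≤ √d * (δt + δ) := by gcongr

theorem stmt1 {n d : ℕ} (x y : Fin n → Fin d → ℝ)
    (hrank : (Matrix.of fun (a : Fin d) (b : Fin n) => y b a).rank = d)
    (j : Fin d → Fin n)
    (hj : ∀ j' : Fin d → Fin n,
      |(colMatrix y j').det| ≤ |(colMatrix y j).det|)
    (i : Fin d → Fin n) (hi : Function.Injective i)
    (R Rt : Matrix (Fin d) (Fin d) ℝ)
    (hR : Rᵀ * R = 1) (hRt : Rtᵀ * Rt = 1)
    (σ : Equiv.Perm (Fin n)) (hσ : ∀ k : Fin d, σ (i k) = j k)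
    (δ δt : ℝ)
    (hδ : δ = Real.sqrt (∑ k : Fin d, (vnorm (x (i k) - R.mulVec (y (σ (i k)))))^2))
    (hδt : δt = Real.sqrt (∑ k : Fin d, (vnorm (x (i k) - Rt.mulVec (y (σ (i k)))))^2)) :
    ∀ l : Fin n, vnorm ((R - Rt).mulVec (y l)) ≤ Real.sqrt d * (δt + δ) :=
  stmt1_general x y hrank j hj i R Rt σ hσ δ δt hδ hδt
end

section
/- Let x_1, …, x_n and x̃_1, …, x̃_n be points in ℝ^d such that the matrix [x̃_1 … x̃_n] has full rank d, and let μ = min_{i≠j} ‖x̃_i − x̃_j‖_2 > 0. Let e_1,…,e_n and ẽ_1,…,ẽ_n be integer element labels. Suppose ε < μ / (2 √(1 + 4d)) and there exist a permutation π* of {1,…,n} with ẽ_{π*(i)} = e_i for all i and a d×d orthogonal matrix R* minimizing sqrt(Σ_{i=1}^n ‖x_i − R x̃_{π(i)}‖_2²) jointly over all element-preserving permutations π and orthogonal R, with the minimum value at (π*, R*) at most ε. Let j_1, …, j_d be d indices maximizing the absolute value of the determinant of [x̃_{j_1} … x̃_{j_d}], define indices i_1,…,i_d by π*(i_k) = j_k,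 and let R be a d×d orthogonal matrix minimizing Σ_{k=1}^d ‖x_{i_k} − R x̃_{j_k}‖_2² over all orthogonal matrices. Then π* equals the permutation π defined by π(i_k) = j_k for k = 1,…,d and, for every k ∉ {i_1,…,i_d}, π(k) = argmin over indices l with e_k = ẽ_l of ‖x_k − R x̃_l‖_2. -/
open scoped BigOperators Matrix

noncomputable def eE {d : ℕ} : (Fin d → ℝ) ≃ₗ[ℝ] EuclideanSpace ℝ (Fin d) :=
  (WithLp.linearEquiv 2 ℝ (Fin d → ℝ)).symm

lemma vnorm_eq {d : ℕ} (v : Fin d → ℝ) : vnorm v = ‖eE v‖ := by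
  rw [EuclideanSpace.norm_eq]
  unfold vnorm
  congr 1
  simp [eE, Real.norm_eq_abs, sq_abs]

lemma vnorm_nonneg {d : ℕ} (v : Fin d → ℝ) : 0 ≤ vnorm v := Real.sqrt_nonneg _

lemma vnorm_sq {d : ℕ} (v : Fin d → ℝ) : vnorm v ^ 2 = ∑ a, (v a) ^ 2 :=
  Real.sq_sqrt (by positivity)

lemma vnorm_add_le {d : ℕ} (v w : Fin d → ℝ) : vnorm (v + w) ≤ vnorm v + vnorm w := by
  rw [vnorm_eq, vnorm_eq, vnorm_eq, map_add]
  exact norm_add_le _ _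

lemma vnorm_neg {d : ℕ} (v : Fin d → ℝ) : vnorm (-v) = vnorm v := by
  rw [vnorm_eq, vnorm_eq, map_neg, norm_neg]

lemma vnorm_sub_rev {d : ℕ} (v w : Fin d → ℝ) : vnorm (v - w) = vnorm (w - v) := by
  rw [← vnorm_neg (v - w), neg_sub]

lemma vnorm_sub_le {d : ℕ} (v w : Fin d → ℝ) : vnorm (v - w) ≤ vnorm v + vnorm w := by
  rw [sub_eq_add_neg]
  exact (vnorm_add_le _ _).trans (by rw [vnorm_neg])

lemma vnorm_sum_le {d m : ℕ} (u : Fin m → Fin d → ℝ) :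
    vnorm (∑ k, u k) ≤ ∑ k, vnorm (u k) := by
  rw [vnorm_eq, map_sum]
  refine (norm_sum_le _ _).trans_eq ?_
  simp [vnorm_eq]

lemma vnorm_smul {d : ℕ} (c : ℝ) (v : Fin d → ℝ) : vnorm (c • v) = |c| * vnorm v := by
  rw [vnorm_eq, map_smul, norm_smul, Real.norm_eq_abs, vnorm_eq]

lemma vnorm_mono {d : ℕ} {f g : Fin d → ℝ} (h : ∀ a, |f a| ≤ g a) : vnorm f ≤ vnorm g := by
  apply Real.sqrt_le_sqrt
  apply Finset.sum_le_sum
  intro a _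
  have h1 := h a
  have h2 := abs_nonneg (f a)
  nlinarith [sq_abs (f a)]

lemma vnorm_mulVec {d : ℕ} (R : Matrix (Fin d) (Fin d) ℝ) (hR : Rᵀ * R = 1)
    (v : Fin d → ℝ) : vnorm (R.mulVec v) = vnorm v := by
  unfold vnorm
  congr 1
  have h : (R *ᵥ v) ⬝ᵥ (R *ᵥ v) = v ⬝ᵥ v := by
    rw [Matrix.dotProduct_mulVec]
    rw [show R *ᵥ v = v ᵥ* Rᵀ from (Matrix.vecMul_transpose R v).symm]
    rw [Matrix.vecMul_vecMul, hR, Matrix.vecMul_one]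
  simpa [dotProduct, sq] using h

/-- Cauchy–Schwarz-type bound. -/
lemma sum_abs_mul_le {d : ℕ} (f g : Fin d → ℝ) :
    ∑ a, |f a| * |g a| ≤ vnorm f * vnorm g := by
  have h := Finset.sum_mul_sq_le_sq_mul_sq Finset.univ (fun a => |f a|) (fun a => |g a|)
  simp only [sq_abs] at h
  have h0 : (0:ℝ) ≤ ∑ a, |f a| * |g a| := Finset.sum_nonneg fun a _ => by positivity
  have := Real.sqrt_le_sqrt h
  rw [Real.sqrt_sq h0, Real.sqrt_mul (by positivity)] at this
  exact this

lemma colMatrix_det_eq {n d : ℕ} (xt : Fin n → Fin d → ℝ) (j : Fin d → Fin n) :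
    (colMatrix xt j).det = Matrix.detRowAlternating (fun b => xt (j b)) := by
  rw [← Matrix.det_transpose]
  rfl

lemma det_ne_zero_of_max {n d : ℕ} (xt : Fin n → Fin d → ℝ)
    (hrank : (Matrix.of fun (a : Fin d) (b : Fin n) => xt b a).rank = d)
    (j : Fin d → Fin n)
    (hj : ∀ j' : Fin d → Fin n, |(colMatrix xt j').det| ≤ |(colMatrix xt j).det|) :
    (colMatrix xt j).det ≠ 0 := by
  intro h0
  have hall : ∀ j' : Fin d → Fin n, (colMatrix xt j').det = 0 := by
    intro j'
    have := hj j'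
    rw [h0, abs_zero] at this
    exact abs_eq_zero.mp (le_antisymm this (abs_nonneg _))
  have hspan : Submodule.span ℝ (Set.range xt) = ⊤ := by
    set A : Matrix (Fin d) (Fin n) ℝ := Matrix.of fun a b => xt b a with hA
    have h1 : A.rank = Module.finrank ℝ (Submodule.span ℝ (Set.range Aᵀ)) :=
      A.rank_eq_finrank_span_cols
    have h2 : Set.range Aᵀ = Set.range xt := rfl
    rw [h2] at h1
    apply Submodule.eq_top_of_finrank_eq
    rw [← h1, hrank]
    simp
  have hcoef : ∀ a : Fin d, ∃ c : Fin n → ℝ, ∑ b, c b • xt b = Pi.single a (1:ℝ) := by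
    intro a
    have : Pi.single a (1:ℝ) ∈ Submodule.span ℝ (Set.range xt) := by
      rw [hspan]; trivial
    exact (Submodule.mem_span_range_iff_exists_fun ℝ).mp this
  choose c hc using hcoef
  set F := (Matrix.detRowAlternating (R := ℝ) (n := Fin d)).toMultilinearMap with hF
  have key := F.map_sum (g := fun a b => c a b • xt b)
  have h1 : F (fun a => Pi.single a (1:ℝ)) = 1 := by
    have : (Matrix.of fun a b => Pi.single a (1:ℝ) b) = (1 : Matrix (Fin d) (Fin d) ℝ) := by
      ext a b
      simp [Pi.single_apply, Matrix.one_apply, eq_comm]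
    calc F (fun a => Pi.single a (1:ℝ))
        = (Matrix.of fun a b => Pi.single a (1:ℝ) b).det := rfl
      _ = 1 := by rw [this, Matrix.det_one]
  rw [show (fun a : Fin d => ∑ b, c a b • xt b) = (fun a => Pi.single a (1:ℝ)) from funext hc, h1]
    at key
  have h2 : ∀ r : Fin d → Fin n,
      F (fun a => c a (r a) • xt (r a)) = 0 := by
    intro r
    rw [F.map_smul_univ (fun a => c a (r a)) (fun a => xt (r a))]
    have := hall r
    rw [colMatrix_det_eq] at this
    have hFr : F (fun a => xt (r a)) = 0 := this
    simp [hFr]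
  rw [Finset.sum_congr rfl (fun r _ => h2 r)] at key
  simp at key

lemma cols_bound {n d : ℕ} (xt : Fin n → Fin d → ℝ) (j : Fin d → Fin n)
    (hdet : (colMatrix xt j).det ≠ 0)
    (hj : ∀ j' : Fin d → Fin n, |(colMatrix xt j').det| ≤ |(colMatrix xt j).det|) (l : Fin n) :
    ∃ c : Fin d → ℝ, (∀ m, |c m| ≤ 1) ∧ xt l = ∑ m, c m • xt (j m) := by
  classical
  set M := colMatrix xt j with hM
  refine ⟨fun m => M.det⁻¹ * Matrix.cramer M (xt l) m, ?_, ?_⟩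
  · intro m
    have h2 : M.updateCol m (xt l) = colMatrix xt (Function.update j m l) := by
      ext a b
      by_cases hb : b = m
      · subst hb; simp [Matrix.updateCol_self, colMatrix]
      · simp [Matrix.updateCol_ne hb, colMatrix, Function.update, hb, hM]
    rw [abs_mul, abs_inv, Matrix.cramer_apply, h2]
    rw [inv_mul_le_iff₀ (abs_pos.mpr hdet), mul_one]
    exact hj _
  · have h3 : M *ᵥ (fun m => M.det⁻¹ * Matrix.cramer M (xt l) m) = xt l := by
      have : (fun m => M.det⁻¹ * Matrix.cramer M (xt l) m) = M.det⁻¹ • Matrix.cramer M (xt l) :=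
        rfl
      rw [this, Matrix.mulVec_smul, Matrix.mulVec_cramer, smul_smul, inv_mul_cancel₀ hdet,
        one_smul]
    have h4 : M *ᵥ (fun m => M.det⁻¹ * Matrix.cramer M (xt l) m) =
        ∑ m, (M.det⁻¹ * Matrix.cramer M (xt l) m) • xt (j m) := by
      funext a
      simp only [Matrix.mulVec, dotProduct, Finset.sum_apply, Pi.smul_apply, smul_eq_mul]
      refine Finset.sum_congr rfl fun m _ => ?_
      have : M a m = xt (j m) a := rfl
      rw [this, mul_comm]
    rw [← h4]
    exact h3.symm

lemma mulVec_sum_smul {d : ℕ} (M : Matrix (Fin d) (Fin d) ℝ) (c : Fin d → ℝ)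
    (y : Fin d → Fin d → ℝ) :
    M.mulVec (∑ m, c m • y m) = ∑ m, c m • M.mulVec (y m) := by
  have h : M.mulVec (∑ m, c m • y m) = M.mulVecLin (∑ m, c m • y m) := rfl
  rw [h, map_sum]
  refine Finset.sum_congr rfl fun m _ => ?_
  rw [map_smul]
  rfl


lemma numeric_aux (d : ℕ) (μ ε t β : ℝ) (ht0 : 0 ≤ t) (hβ0 : 0 ≤ β) (hε0 : 0 ≤ ε)
    (htS : t ^ 2 + β ^ 2 ≤ ε ^ 2) (hεμ : ε < μ / (2 * Real.sqrt (1 + 4 * d))) :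
    2 * t + 2 * (Real.sqrt d * (2 * β)) < μ := by
  have hd0 : (0:ℝ) ≤ (d:ℝ) := Nat.cast_nonneg d
  have hsq : (t + 2 * Real.sqrt d * β) ^ 2 ≤ (1 + 4 * d) * ε ^ 2 := by
    have h2 : (t + 2 * Real.sqrt d * β) ^ 2 ≤ (1 + 4 * d) * (t ^ 2 + β ^ 2) := by
      nlinarith [sq_nonneg (β - 2 * Real.sqrt d * t), Real.sq_sqrt hd0, hβ0, ht0,
        Real.sqrt_nonneg (d:ℝ)]
    nlinarith [hd0]
  have h4 : t + 2 * Real.sqrt d * β ≤ Real.sqrt (1 + 4 * d) * ε := by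
    have h5 := Real.sqrt_le_sqrt hsq
    have hnn : (0:ℝ) ≤ t + 2 * Real.sqrt d * β :=
      add_nonneg ht0 (mul_nonneg (mul_nonneg (by norm_num) (Real.sqrt_nonneg _)) hβ0)
    rwa [Real.sqrt_sq hnn, Real.sqrt_mul (by positivity), Real.sqrt_sq hε0] at h5
  have h6 : ε * (2 * Real.sqrt (1 + 4 * (d:ℝ))) < μ := by
    have hpos : 0 < 2 * Real.sqrt (1 + 4 * (d:ℝ)) := by positivity
    exact (lt_div_iff₀ hpos).mp hεμ
  nlinarith [h4, h6]

set_option maxHeartbeats 1000000 in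
theorem stmt2 {n d : ℕ} (x xt : Fin n → Fin d → ℝ) (e et : Fin n → ℤ) (ε μ : ℝ)
    (hrank : (Matrix.of fun (a : Fin d) (b : Fin n) => xt b a).rank = d)
    -- μ is the minimal particle distance in x̃, and it is positive
    (hμ : IsLeast {r : ℝ | ∃ p q : Fin n, p ≠ q ∧ r = vnorm (xt p - xt q)} μ)
    (hμ0 : 0 < μ)
    (hεμ : ε < μ / (2 * Real.sqrt (1 + 4 * d)))
    -- (σs, Rs) is an element-preserving permutation together with an orthogonal matrix
    -- jointly minimizing the RMSD objective, with minimum value at most ε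
    (σs : Equiv.Perm (Fin n)) (he : ∀ p : Fin n, et (σs p) = e p)
    (Rs : Matrix (Fin d) (Fin d) ℝ) (hRs : Rsᵀ * Rs = 1)
    (hmin : ∀ σ : Equiv.Perm (Fin n), (∀ p : Fin n, et (σ p) = e p) →
      ∀ R' : Matrix (Fin d) (Fin d) ℝ, R'ᵀ * R' = 1 →
        Real.sqrt (∑ p, (vnorm (x p - Rs.mulVec (xt (σs p)))) ^ 2) ≤
          Real.sqrt (∑ p, (vnorm (x p - R'.mulVec (xt (σ p)))) ^ 2))
    (hval : Real.sqrt (∑ p, (vnorm (x p - Rs.mulVec (xt (σs p)))) ^ 2) ≤ ε)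
    -- j maximizes the absolute determinant, i is defined by σs (i k) = j k
    (j : Fin d → Fin n)
    (hj : ∀ j' : Fin d → Fin n, |(colMatrix xt j').det| ≤ |(colMatrix xt j).det|)
    (i : Fin d → Fin n) (hi : ∀ k : Fin d, σs (i k) = j k)
    -- R minimizes the partial objective over all orthogonal matrices
    (R : Matrix (Fin d) (Fin d) ℝ) (hR : Rᵀ * R = 1)
    (hRmin : ∀ R' : Matrix (Fin d) (Fin d) ℝ, R'ᵀ * R' = 1 →
      ∑ k : Fin d, (vnorm (x (i k) - R.mulVec (xt (j k)))) ^ 2 ≤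
        ∑ k : Fin d, (vnorm (x (i k) - R'.mulVec (xt (j k)))) ^ 2) :
    -- Conclusion: σs is exactly the permutation π defined by π (i k) = j k and, away
    -- from the i k, by the argmin of ‖x k − R x̃ l‖ over l with e k = ẽ l: that is,
    -- σs satisfies these defining equations, and any permutation satisfying them is σs.
    ((∀ k : Fin n, (∀ a : Fin d, k ≠ i a) →
        e k = et (σs k) ∧
        ∀ l : Fin n, e k = et l →
          vnorm (x k - R.mulVec (xt (σs k))) ≤ vnorm (x k - R.mulVec (xt l)))) ∧
    (∀ σ : Equiv.Perm (Fin n), (∀ k : Fin d, σ (i k) = j k) →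
      (∀ k : Fin n, (∀ a : Fin d, k ≠ i a) →
        e k = et (σ k) ∧
        ∀ l : Fin n, e k = et l →
          vnorm (x k - R.mulVec (xt (σ k))) ≤ vnorm (x k - R.mulVec (xt l))) →
      σ = σs) := by
  classical
  have hdet : (colMatrix xt j).det ≠ 0 := det_ne_zero_of_max xt hrank j hj
  have hjinj : Function.Injective j := by
    intro a a' h
    by_contra hne
    exact hdet (Matrix.det_zero_of_column_eq hne (fun k => by simp only [colMatrix,
      Matrix.of_apply, h]))
  have hiinj : Function.Injective i := by
    intro a a' h
    apply hjinj
    rw [← hi a, ← hi a']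
    exact congrArg σs h
  have hε0 : 0 ≤ ε := le_trans (Real.sqrt_nonneg _) hval
  set bb : Fin n → ℝ := fun p => vnorm (x p - Rs.mulVec (xt (σs p))) with hbdef
  have hb0 : ∀ p, 0 ≤ bb p := fun p => vnorm_nonneg _
  have hbsum : ∑ p, bb p ^ 2 ≤ ε ^ 2 := by
    have h1 : (Real.sqrt (∑ p, bb p ^ 2)) ^ 2 ≤ ε ^ 2 :=
      pow_le_pow_left₀ (Real.sqrt_nonneg _) hval 2
    rwa [Real.sq_sqrt (by positivity)] at h1
  set aa : Fin d → ℝ := fun m => vnorm (x (i m) - R.mulVec (xt (j m))) with hadef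
  have ha0 : ∀ m, 0 ≤ aa m := fun m => vnorm_nonneg _
  set S : ℝ := ∑ m, bb (i m) ^ 2 with hSdef
  have hS0 : 0 ≤ S := Finset.sum_nonneg fun m _ => sq_nonneg _
  set β : ℝ := Real.sqrt S with hβdef
  have hβ0 : 0 ≤ β := Real.sqrt_nonneg _
  have hβS : β ^ 2 = S := Real.sq_sqrt hS0
  have haS : ∑ m, aa m ^ 2 ≤ S := by
    have h1 := hRmin Rs hRs
    have h2 : ∀ m : Fin d, vnorm (x (i m) - Rs.mulVec (xt (j m))) = bb (i m) := by
      intro m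
      rw [hbdef]
      simp only
      rw [hi m]
    calc ∑ m, aa m ^ 2 ≤ ∑ m, vnorm (x (i m) - Rs.mulVec (xt (j m))) ^ 2 := h1
      _ = S := Finset.sum_congr rfl fun m _ => by rw [h2]
  have hα : Real.sqrt (∑ m, aa m ^ 2) ≤ β := Real.sqrt_le_sqrt haS
  -- uniform bound on the rotation discrepancy applied to any particle
  have hU : ∀ l : Fin n, vnorm (Rs.mulVec (xt l) - R.mulVec (xt l)) ≤ Real.sqrt d * (2 * β) := by
    intro l
    obtain ⟨c, hc1, hcl⟩ := cols_bound xt j hdet hj l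
    set V : Fin d → Fin d → ℝ := fun m => Rs.mulVec (xt (j m)) - R.mulVec (xt (j m)) with hV
    have hdecomp : Rs.mulVec (xt l) - R.mulVec (xt l) = ∑ m, c m • V m := by
      rw [hcl, mulVec_sum_smul, mulVec_sum_smul, ← Finset.sum_sub_distrib]
      exact Finset.sum_congr rfl fun m _ => (smul_sub _ _ _).symm
    have hVb : ∀ m, vnorm (V m) ≤ aa m + bb (i m) := by
      intro m
      have hVm : V m = (x (i m) - R.mulVec (xt (j m))) - (x (i m) - Rs.mulVec (xt (j m))) := by
        rw [hV]; simp only; abel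
      rw [hVm]
      refine (vnorm_sub_le _ _).trans ?_
      have h2 : vnorm (x (i m) - Rs.mulVec (xt (j m))) = bb (i m) := by
        rw [hbdef]; simp only; rw [hi m]
      rw [h2]
    have step1 : vnorm (Rs.mulVec (xt l) - R.mulVec (xt l)) ≤ ∑ m, |c m| * vnorm (V m) := by
      rw [hdecomp]
      refine (vnorm_sum_le _).trans ?_
      exact Finset.sum_le_sum fun m _ => le_of_eq (vnorm_smul _ _)
    have step2 : ∑ m, |c m| * vnorm (V m) ≤ vnorm c * vnorm (fun m => vnorm (V m)) := by
      refine le_trans (le_of_eq ?_) (sum_abs_mul_le c (fun m => vnorm (V m)))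
      exact Finset.sum_congr rfl fun m _ => by rw [abs_of_nonneg (vnorm_nonneg (V m))]
    have step3 : vnorm c ≤ Real.sqrt d := by
      have h1 : ∑ m, c m ^ 2 ≤ (d:ℝ) := by
        calc ∑ m, c m ^ 2 ≤ ∑ _m : Fin d, (1:ℝ) :=
              Finset.sum_le_sum fun m _ => by
                nlinarith [hc1 m, abs_nonneg (c m), sq_abs (c m)]
          _ = d := by simp
      exact le_trans (Real.sqrt_le_sqrt h1) le_rfl
    have step4 : vnorm (fun m => vnorm (V m)) ≤ 2 * β := by
      have h5 : vnorm (fun m => vnorm (V m)) ≤ vnorm (fun m => aa m + bb (i m)) := by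
        refine vnorm_mono fun m => ?_
        rw [abs_of_nonneg (vnorm_nonneg (V m))]
        exact hVb m
      have h6 : vnorm (fun m => aa m + bb (i m)) ≤ vnorm aa + vnorm (fun m => bb (i m)) :=
        vnorm_add_le aa (fun m => bb (i m))
      have h7 : vnorm aa ≤ β := hα
      have h8 : vnorm (fun m => bb (i m)) = β := rfl
      linarith
    calc vnorm (Rs.mulVec (xt l) - R.mulVec (xt l))
        ≤ vnorm c * vnorm (fun m => vnorm (V m)) := step1.trans step2
      _ ≤ Real.sqrt d * (2 * β) := by
          refine mul_le_mul step3 step4 (vnorm_nonneg _) (Real.sqrt_nonneg _)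
  have hμle : ∀ p q : Fin n, p ≠ q → μ ≤ vnorm (xt p - xt q) := fun p q h =>
    hμ.2 ⟨p, q, h, rfl⟩
  -- the key strict inequality
  have key : ∀ k : Fin n, (∀ a' : Fin d, k ≠ i a') → ∀ l : Fin n, l ≠ σs k →
      vnorm (x k - R.mulVec (xt (σs k))) < vnorm (x k - R.mulVec (xt l)) := by
    intro k hk l hl
    have ht0 : 0 ≤ bb k := hb0 k
    have htS : bb k ^ 2 + S ≤ ε ^ 2 := by
      have hnotmem : k ∉ Finset.univ.image i := by
        simp only [Finset.mem_image]
        rintro ⟨m, -, hm⟩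
        exact hk m hm.symm
      have h1 : ∑ p ∈ insert k (Finset.univ.image i), bb p ^ 2 ≤ ∑ p, bb p ^ 2 :=
        Finset.sum_le_sum_of_subset_of_nonneg (Finset.subset_univ _) fun p _ _ => sq_nonneg _
      rw [Finset.sum_insert hnotmem,
        Finset.sum_image (fun m _ m' _ h => hiinj h)] at h1
      exact le_trans h1 hbsum
    have hEst : 2 * bb k + 2 * (Real.sqrt d * (2 * β)) < μ :=
      numeric_aux d μ ε (bb k) β ht0 hβ0 hε0 (by rw [hβS]; exact htS) hεμ
    have hUσ := hU (σs k)
    have hUl := hU l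
    have hLHS : vnorm (x k - R.mulVec (xt (σs k))) ≤ bb k + Real.sqrt d * (2 * β) := by
      have hdec : x k - R.mulVec (xt (σs k)) =
          (x k - Rs.mulVec (xt (σs k))) + (Rs.mulVec (xt (σs k)) - R.mulVec (xt (σs k))) := by
        abel
      rw [hdec]
      exact (vnorm_add_le _ _).trans (add_le_add le_rfl hUσ)
    have hμ' : μ ≤ vnorm (xt (σs k) - xt l) := hμle _ _ fun h => hl h.symm
    have hRsnorm : vnorm (Rs.mulVec (xt (σs k)) - Rs.mulVec (xt l)) =
        vnorm (xt (σs k) - xt l) := by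
      rw [← Matrix.mulVec_sub, vnorm_mulVec Rs hRs]
    have hRHS : μ - bb k - Real.sqrt d * (2 * β) ≤ vnorm (x k - R.mulVec (xt l)) := by
      have hdec : Rs.mulVec (xt (σs k)) - Rs.mulVec (xt l) =
          ((x k - R.mulVec (xt l)) + (R.mulVec (xt l) - Rs.mulVec (xt l))) -
            (x k - Rs.mulVec (xt (σs k))) := by
        abel
      have h7 : vnorm (Rs.mulVec (xt (σs k)) - Rs.mulVec (xt l)) ≤
          (vnorm (x k - R.mulVec (xt l)) + Real.sqrt d * (2 * β)) + bb k := by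
        rw [hdec]
        refine (vnorm_sub_le _ _).trans ?_
        have h8 : vnorm (R.mulVec (xt l) - Rs.mulVec (xt l)) ≤ Real.sqrt d * (2 * β) := by
          rw [vnorm_sub_rev]; exact hUl
        exact add_le_add ((vnorm_add_le _ _).trans (add_le_add le_rfl h8)) le_rfl
      rw [hRsnorm] at h7
      linarith
    linarith
  have he' : ∀ p, e p = et (σs p) := fun p => (he p).symm
  constructor
  · intro k hk
    refine ⟨he' k, ?_⟩
    intro l _
    by_cases hls : l = σs k
    · rw [hls]
    · exact le_of_lt (key k hk l hls)
  · intro σ hσi hσ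
    refine Equiv.ext fun p => ?_
    by_cases hp : ∃ a, p = i a
    · obtain ⟨a, rfl⟩ := hp
      rw [hσi a, hi a]
    · push_neg at hp
      obtain ⟨hep, hmin'⟩ := hσ p hp
      by_contra hne
      have h1 := hmin' (σs p) (he' p)
      have h2 := key p hp (σ p) hne
      linarith
end

section
/- Let A be a nonsingular d×d real matrix and let k ∈ {1,…,d} be an index with ‖A − A(k) A(k)⁺ A‖_F ≤ √d · σ_d(A), where A(k) is A with its k-th column removed and A(k)⁺ its Moore–Penrose pseudo-inverse. Then for every d×d orthogonal matrix U, at least one of the following two inequalities holds: ‖A_{*,k} − U A_{*,k}‖_2 ≤ (1 + √2) √d · ‖U A(k) − A(k)‖_F, or ‖2 A(k) A(k)⁺ A_{*,k} − A_{*,k} − U A_{*,k}‖_2 ≤ (1 + √2) √d · ‖U A(k) − A(k)‖_F. -/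
open scoped BigOperators Matrix

/-- Frobenius norm of a real matrix. -/
noncomputable def frob {m n : Type*} [Fintype m] [Fintype n] (M : Matrix m n ℝ) : ℝ :=
  Real.sqrt (∑ i, ∑ j, (M i j) ^ 2)

/-- `A` with its `k`-th column removed; the remaining columns are indexed by `{j // j ≠ k}`. -/
def colDel {d : ℕ} (A : Matrix (Fin d) (Fin d) ℝ) (k : Fin d) :
    Matrix (Fin d) {j : Fin d // j ≠ k} ℝ :=
  Matrix.of fun i j => A i j.1

/-- `P` is the Moore–Penrose pseudo-inverse of `M` (the four Penrose conditions). -/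
def IsMPInv {m n : Type*} [Fintype m] [Fintype n]
    (M : Matrix m n ℝ) (P : Matrix n m ℝ) : Prop :=
  M * P * M = M ∧ P * M * P = P ∧ (M * P)ᵀ = M * P ∧ (P * M)ᵀ = P * M

/-- The smallest singular value of a square matrix, as the infimum of `‖A v‖` over
unit vectors `v`. -/
noncomputable def sigmaMin {d : ℕ} (A : Matrix (Fin d) (Fin d) ℝ) : ℝ :=
  sInf {r : ℝ | ∃ v : Fin d → ℝ, vnorm v = 1 ∧ r = vnorm (A.mulVec v)}

/-!
Write `a = A_{*,k}`, `B = A(k)`, `w = B⁺ a` and `r = a - B B⁺ a`, so that `a = B w + r` with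
`r ⊥ range B`; the hypothesis says `‖r‖ ≤ √d σ` with `σ = σ_d(A)`, and testing `σ` on the vector
`(w, -1)`, which `A` sends to `-r`, gives `‖w‖ ≤ √d`. Let `E = ‖U B - B‖_F` and `x = B B⁺ U r`.
Since `U r ⊥ U B`, `‖x‖² = ⟪U r, (B - U B) B⁺ U r⟫ ≤ ‖r‖ E ‖B⁺ U r‖ ≤ √d E ‖x‖`, the last step
because `σ ‖B⁺ U r‖ ≤ ‖x‖`. As `A` is invertible, `(range B)ᗮ` is spanned by `r`, so
`U r = x + γ r`, and `‖U r‖ = ‖r‖` forces `‖r - U r‖ ≤ √2 ‖x‖` if `γ ≥ 0` and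
`‖r + U r‖ ≤ √2 ‖x‖` if `γ ≤ 0`. Conclude with `a - U a = (B - U B) w + (r - U r)` and
`2 B B⁺ a - a - U a = (B - U B) w - (r + U r)`.
-/

open Matrix WithLp
open scoped RealInnerProductSpace

section Norms

variable {m n : Type*} [Fintype m] [Fintype n]

lemma vnorm_eq_norm {d : ℕ} (v : Fin d → ℝ) : vnorm v = ‖toLp 2 v‖ := by
  simp [vnorm, EuclideanSpace.norm_eq]

lemma real_inner_toLp_toLp (x y : n → ℝ) : ⟪toLp 2 x, toLp 2 y⟫ = x ⬝ᵥ y := by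
  rw [EuclideanSpace.inner_toLp_toLp, star_trivial, dotProduct_comm]

lemma dotProduct_le_norm_mul_norm (x y : n → ℝ) : x ⬝ᵥ y ≤ ‖toLp 2 x‖ * ‖toLp 2 y‖ :=
  real_inner_toLp_toLp x y ▸ real_inner_le_norm _ _

lemma dotProduct_self_eq_norm_sq (x : n → ℝ) : x ⬝ᵥ x = ‖toLp 2 x‖ ^ 2 :=
  real_inner_toLp_toLp x x ▸ real_inner_self_eq_norm_sq _

lemma frob_nonneg (M : Matrix m n ℝ) : 0 ≤ frob M := Real.sqrt_nonneg _

attribute [local instance] Matrix.frobeniusNormedAddCommGroup in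
lemma frob_eq_norm (M : Matrix m n ℝ) : frob M = ‖M‖ := by
  simp [frob, frobenius_norm_def, Real.sqrt_eq_rpow]

attribute [local instance] Matrix.frobeniusNormedAddCommGroup in
lemma frob_sub_rev (M N : Matrix m n ℝ) : frob (M - N) = frob (N - M) := by
  rw [frob_eq_norm, frob_eq_norm, norm_sub_rev]

attribute [local instance] Matrix.frobeniusNormedAddCommGroup in
lemma norm_mulVec_le_frob_mul (M : Matrix m n ℝ) (z : n → ℝ) :
    ‖toLp 2 (M *ᵥ z)‖ ≤ frob M * ‖toLp 2 z‖ := by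
  have h := frobenius_norm_mul M (replicateCol Unit z)
  rwa [← replicateCol_mulVec, frobenius_norm_replicateCol, frobenius_norm_replicateCol,
    ← frob_eq_norm] at h

lemma mulVec_dotProduct_mulVec_of_transpose_mul_eq_one [DecidableEq m] {U : Matrix m m ℝ}
    (hU : Uᵀ * U = 1) (v w : m → ℝ) : (U *ᵥ v) ⬝ᵥ (U *ᵥ w) = v ⬝ᵥ w := by
  rw [dotProduct_mulVec, ← mulVec_transpose, mulVec_mulVec, hU, one_mulVec]

lemma norm_mulVec_of_transpose_mul_eq_one [DecidableEq m] {U : Matrix m m ℝ}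
    (hU : Uᵀ * U = 1) (v : m → ℝ) : ‖toLp 2 (U *ᵥ v)‖ = ‖toLp 2 v‖ := by
  rw [norm_eq_sqrt_real_inner, norm_eq_sqrt_real_inner, real_inner_toLp_toLp,
    real_inner_toLp_toLp, mulVec_dotProduct_mulVec_of_transpose_mul_eq_one hU]

lemma norm_mulVec_add_le (M : Matrix m n ℝ) (w : n → ℝ) (s : m → ℝ) {c : ℝ}
    (hw : ‖toLp 2 w‖ ≤ c) (hs : ‖toLp 2 s‖ ≤ √2 * (c * frob M)) :
    ‖toLp 2 (M *ᵥ w + s)‖ ≤ (1 + √2) * c * frob M := by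
  have hM := frob_nonneg M
  calc ‖toLp 2 (M *ᵥ w + s)‖ ≤ frob M * ‖toLp 2 w‖ + ‖toLp 2 s‖ := by
        rw [toLp_add]
        exact (norm_add_le _ _).trans (add_le_add_left (norm_mulVec_le_frob_mul M w) _)
    _ ≤ frob M * c + √2 * (c * frob M) := by gcongr
    _ = (1 + √2) * c * frob M := by ring

lemma norm_sub_mulVec_le_or_norm_two_smul_sub_le [DecidableEq m] {B : Matrix m n ℝ}
    {U : Matrix m m ℝ} {a r x : m → ℝ} {w : n → ℝ} {c : ℝ} (ha : a = B *ᵥ w + r)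
    (hw : ‖toLp 2 w‖ ≤ c) (hx : ‖toLp 2 x‖ ≤ c * frob (B - U * B))
    (hr : ‖toLp 2 (r - U *ᵥ r)‖ ≤ √2 * ‖toLp 2 x‖ ∨ ‖toLp 2 (r + U *ᵥ r)‖ ≤ √2 * ‖toLp 2 x‖) :
    ‖toLp 2 (a - U *ᵥ a)‖ ≤ (1 + √2) * c * frob (B - U * B) ∨
      ‖toLp 2 ((2 : ℝ) • B *ᵥ w - a - U *ᵥ a)‖ ≤ (1 + √2) * c * frob (B - U * B) := by
  subst ha
  rcases hr with h | h
  · have hdecomp : B *ᵥ w + r - U *ᵥ (B *ᵥ w + r) = (B - U * B) *ᵥ w + (r - U *ᵥ r) := by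
      rw [mulVec_add, sub_mulVec, ← mulVec_mulVec]
      abel
    rw [hdecomp]
    exact .inl (norm_mulVec_add_le _ _ _ hw (h.trans (by gcongr)))
  · have hdecomp : (2 : ℝ) • B *ᵥ w - (B *ᵥ w + r) - U *ᵥ (B *ᵥ w + r) =
        (B - U * B) *ᵥ w + -(r + U *ᵥ r) := by
      rw [mulVec_add, sub_mulVec, ← mulVec_mulVec]
      module
    rw [hdecomp]
    refine .inr (norm_mulVec_add_le _ _ _ hw ?_)
    rw [toLp_neg, norm_neg]
    exact h.trans (by gcongr)

end Norms

lemma norm_sub_le_or_norm_add_le_of_eq_add_smul {F : Type*} [NormedAddCommGroup F]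
    [InnerProductSpace ℝ F] {x r y : F} {γ : ℝ} (hxr : ⟪x, r⟫ = 0) (hy : y = x + γ • r)
    (hnorm : ‖y‖ = ‖r‖) : ‖r - y‖ ≤ √2 * ‖x‖ ∨ ‖r + y‖ ≤ √2 * ‖x‖ := by
  subst hy
  have hrx : ⟪r, x⟫ = 0 := by rwa [real_inner_comm]
  have hpyth : ‖x‖ ^ 2 + γ ^ 2 * ‖r‖ ^ 2 = ‖r‖ ^ 2 := by
    have h : ‖x + γ • r‖ ^ 2 = ‖r‖ ^ 2 := by rw [hnorm]
    rwa [norm_add_sq_real, inner_smul_right, hxr, mul_zero, mul_zero, add_zero, norm_smul,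
      mul_pow, Real.norm_eq_abs, sq_abs] at h
  have hsub : ‖r - (x + γ • r)‖ ^ 2 = (1 - γ) ^ 2 * ‖r‖ ^ 2 + ‖x‖ ^ 2 := by
    rw [show r - (x + γ • r) = (1 - γ) • r - x by module, norm_sub_sq_real, inner_smul_left,
      hrx, norm_smul, mul_pow, Real.norm_eq_abs, sq_abs]
    simp
  have hadd : ‖r + (x + γ • r)‖ ^ 2 = (1 + γ) ^ 2 * ‖r‖ ^ 2 + ‖x‖ ^ 2 := by
    rw [show r + (x + γ • r) = (1 + γ) • r + x by module, norm_add_sq_real, inner_smul_left,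
      hrx, norm_smul, mul_pow, Real.norm_eq_abs, sq_abs]
    simp
  have hsq : ∀ t : ℝ, 0 ≤ t → t ^ 2 ≤ 2 * ‖x‖ ^ 2 → t ≤ √2 * ‖x‖ := fun t ht h =>
    (pow_le_pow_iff_left₀ ht (by positivity) two_ne_zero).mp <| by
      rwa [mul_pow, Real.sq_sqrt zero_le_two]
  rcases le_total 0 γ with hγ | hγ
  · exact .inl <| hsq _ (norm_nonneg _) <| by nlinarith [sq_nonneg ‖r‖, sq_nonneg ‖x‖]
  · exact .inr <| hsq _ (norm_nonneg _) <| by nlinarith [sq_nonneg ‖r‖, sq_nonneg ‖x‖]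

lemma sub_mul_mulVec_dotProduct_mulVec {m n : Type*} [Fintype m] [Fintype n]
    {M : Matrix m n ℝ} {P : Matrix n m ℝ} (hMPM : M * P * M = M) (hsymm : (M * P)ᵀ = M * P)
    (u : m → ℝ) (z : n → ℝ) : (u - (M * P) *ᵥ u) ⬝ᵥ (M *ᵥ z) = 0 := by
  rw [sub_dotProduct, dotProduct_comm ((M * P) *ᵥ u), dotProduct_mulVec (M *ᵥ z),
    ← mulVec_transpose, hsymm, mulVec_mulVec, hMPM, dotProduct_comm, sub_self]

section SquareMatrix

variable {d : ℕ} (A : Matrix (Fin d) (Fin d) ℝ) (k : Fin d)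

lemma mulVec_eq_colDel_mulVec_add (v : Fin d → ℝ) :
    A *ᵥ v = colDel A k *ᵥ (fun j => v j) + v k • fun i => A i k := by
  ext i
  simp only [mulVec, dotProduct, Pi.add_apply, Pi.smul_apply, smul_eq_mul,
    Fintype.sum_eq_add_sum_subtype_ne _ k, colDel, of_apply]
  ring

lemma norm_sq_eq_sq_add_norm_sq_restrict (v : Fin d → ℝ) :
    ‖toLp 2 v‖ ^ 2 = v k ^ 2 + ‖toLp 2 (fun j : {j // j ≠ k} => v j)‖ ^ 2 := by
  simp only [EuclideanSpace.norm_sq_eq, Real.norm_eq_abs, sq_abs,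
    Fintype.sum_eq_add_sum_subtype_ne _ k]

lemma norm_restrict_le (v : Fin d → ℝ) :
    ‖toLp 2 (fun j : {j // j ≠ k} => v j)‖ ≤ ‖toLp 2 v‖ :=
  (pow_le_pow_iff_left₀ (norm_nonneg _) (norm_nonneg _) two_ne_zero).mp <| by
    rw [norm_sq_eq_sq_add_norm_sq_restrict k v]
    exact le_add_of_nonneg_left (sq_nonneg _)

lemma frob_eq_norm_col_of_eq_zero {m : Type*} [Fintype m] (M : Matrix m (Fin d) ℝ)
    (hM : ∀ i, ∀ j ≠ k, M i j = 0) : frob M = ‖toLp 2 fun i => M i k‖ := by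
  rw [frob, EuclideanSpace.norm_eq]
  congr 1
  refine Finset.sum_congr rfl fun i _ => ?_
  rw [Fintype.sum_eq_single k fun j hj => by rw [hM i j hj, sq, mul_zero], Real.norm_eq_abs,
    sq_abs]

lemma sigmaMin_nonneg : 0 ≤ sigmaMin A :=
  Real.sInf_nonneg fun _ ⟨_, _, hr⟩ => hr ▸ Real.sqrt_nonneg _

lemma sigmaMin_mul_norm_le (v : Fin d → ℝ) :
    sigmaMin A * ‖toLp 2 v‖ ≤ ‖toLp 2 (A *ᵥ v)‖ := by
  rcases eq_or_ne v 0 with rfl | hv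
  · simp
  have hpos : 0 < ‖toLp 2 v‖ := norm_pos_iff.mpr (by simpa using hv)
  have hle : sigmaMin A ≤ vnorm (A *ᵥ (‖toLp 2 v‖⁻¹ • v)) :=
    csInf_le ⟨0, fun _ ⟨_, _, hr⟩ => hr ▸ Real.sqrt_nonneg _⟩
      ⟨_, by rw [vnorm_eq_norm, toLp_smul, norm_smul, norm_inv, norm_norm,
        inv_mul_cancel₀ hpos.ne'], rfl⟩
  rw [vnorm_eq_norm, mulVec_smul, toLp_smul, norm_smul, norm_inv, norm_norm] at hle
  rwa [← le_div_iff₀ hpos, div_eq_inv_mul]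

lemma sigmaMin_mul_norm_le_colDel_mulVec_add (z : {j // j ≠ k} → ℝ) (t : ℝ) :
    sigmaMin A * ‖toLp 2 z‖ ≤ ‖toLp 2 (colDel A k *ᵥ z + t • fun i => A i k)‖ := by
  set v := (Equiv.piSplitAt k fun _ => ℝ).symm (t, z)
  have hv : (v k, fun j : {j // j ≠ k} => v j) = (t, z) :=
    (Equiv.piSplitAt k fun _ => ℝ).apply_symm_apply (t, z)
  rw [Prod.mk.injEq] at hv
  rw [← hv.1, ← hv.2, ← mulVec_eq_colDel_mulVec_add]
  exact (mul_le_mul_of_nonneg_left (norm_restrict_le k v) (sigmaMin_nonneg A)).trans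
    (sigmaMin_mul_norm_le A v)

attribute [local instance] Matrix.frobeniusNormedAddCommGroup in
lemma sigmaMin_pos [Nonempty (Fin d)] (hA : A.det ≠ 0) : 0 < sigmaMin A := by
  obtain ⟨i⟩ := ‹Nonempty (Fin d)›
  have hinv : A⁻¹ ≠ 0 :=
    (isUnit_nonsing_inv_iff.mpr ((isUnit_iff_isUnit_det A).mpr hA.isUnit)).ne_zero
  have hc : 0 < frob A⁻¹ := frob_eq_norm A⁻¹ ▸ norm_pos_iff.mpr hinv
  refine lt_of_lt_of_le (inv_pos.mpr hc) (le_csInf ⟨_, Pi.single i 1, ?_, rfl⟩ ?_)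
  · rw [vnorm_eq_norm, PiLp.toLp_single, PiLp.norm_single, norm_one]
  · rintro _ ⟨v, hv, rfl⟩
    have h := norm_mulVec_le_frob_mul A⁻¹ (A *ᵥ v)
    rw [mulVec_mulVec, nonsing_inv_mul A (isUnit_iff_ne_zero.mpr hA), one_mulVec,
      ← vnorm_eq_norm, hv, ← vnorm_eq_norm] at h
    rwa [inv_le_iff_one_le_mul₀' hc]

end SquareMatrix

section Residual

variable {d : ℕ} {A : Matrix (Fin d) (Fin d) ℝ} {k : Fin d} {P : Matrix {j // j ≠ k} (Fin d) ℝ}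

variable (A k P) in
def colResidual : Fin d → ℝ := (fun i => A i k) - (colDel A k * P) *ᵥ fun i => A i k

variable (A k P) in
lemma col_eq_colDel_mulVec_add_colResidual :
    (fun i => A i k) = colDel A k *ᵥ (P *ᵥ fun i => A i k) + colResidual A k P := by
  rw [colResidual, mulVec_mulVec, add_sub_cancel]

lemma frob_sub_colDel_mul_mul_eq_norm_colResidual
    (hMPM : colDel A k * P * colDel A k = colDel A k) :
    frob (A - colDel A k * P * A) = ‖toLp 2 (colResidual A k P)‖ := by
  refine frob_eq_norm_col_of_eq_zero k _ fun i j hj => ?_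
  have h := congrFun (congrFun hMPM i) ⟨j, hj⟩
  simp only [mul_apply, colDel, of_apply] at h
  rw [Matrix.sub_apply, sub_eq_zero]
  exact h.symm

lemma norm_mulVec_col_le_sqrt (hA : A.det ≠ 0)
    (hr : ‖toLp 2 (colResidual A k P)‖ ≤ √d * sigmaMin A) :
    ‖toLp 2 (P *ᵥ fun i => A i k)‖ ≤ √d := by
  have : Nonempty (Fin d) := ⟨k⟩
  have h := sigmaMin_mul_norm_le_colDel_mulVec_add A k (P *ᵥ fun i => A i k) (-1)
  rw [neg_one_smul, ← sub_eq_add_neg, mulVec_mulVec, toLp_sub, norm_sub_rev, ← toLp_sub,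
    ← colResidual] at h
  exact le_of_mul_le_mul_left (h.trans (hr.trans_eq (mul_comm _ _))) (sigmaMin_pos A hA)

variable (hMPM : colDel A k * P * colDel A k = colDel A k)
  (hsymm : (colDel A k * P)ᵀ = colDel A k * P)
include hMPM hsymm

lemma colResidual_dotProduct_colDel_mulVec (z : {j // j ≠ k} → ℝ) :
    colResidual A k P ⬝ᵥ (colDel A k *ᵥ z) = 0 :=
  sub_mul_mulVec_dotProduct_mulVec hMPM hsymm _ z

lemma exists_eq_smul_colResidual (hA : A.det ≠ 0) {u : Fin d → ℝ}
    (hu : ∀ z, u ⬝ᵥ (colDel A k *ᵥ z) = 0) : ∃ γ : ℝ, u = γ • colResidual A k P := by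
  obtain ⟨v, rfl⟩ : ∃ v, A *ᵥ v = u :=
    ⟨A⁻¹ *ᵥ u, by rw [mulVec_mulVec, mul_nonsing_inv A (isUnit_iff_ne_zero.mpr hA), one_mulVec]⟩
  have hy : A *ᵥ v - v k • colResidual A k P =
      colDel A k *ᵥ ((fun j : {j // j ≠ k} => v j) + v k • P *ᵥ fun i => A i k) := by
    conv_lhs => rw [mulVec_eq_colDel_mulVec_add A k v, col_eq_colDel_mulVec_add_colResidual A k P]
    rw [mulVec_add, mulVec_smul]
    module
  refine ⟨v k, sub_eq_zero.mp (dotProduct_self_eq_zero.mp ?_)⟩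
  calc (A *ᵥ v - v k • colResidual A k P) ⬝ᵥ (A *ᵥ v - v k • colResidual A k P)
      = (A *ᵥ v - v k • colResidual A k P) ⬝ᵥ (colDel A k *ᵥ _) := by rw [← hy]
    _ = 0 := by
      rw [sub_dotProduct, smul_dotProduct, hu, colResidual_dotProduct_colDel_mulVec hMPM hsymm,
        smul_zero, sub_zero]

lemma norm_sq_colDel_mulVec_le {U : Matrix (Fin d) (Fin d) ℝ} (hU : Uᵀ * U = 1) :
    ‖toLp 2 (colDel A k *ᵥ P *ᵥ U *ᵥ colResidual A k P)‖ ^ 2 ≤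
      ‖toLp 2 (colResidual A k P)‖ *
        (frob (U * colDel A k - colDel A k) * ‖toLp 2 (P *ᵥ U *ᵥ colResidual A k P)‖) := by
  set B := colDel A k
  set r := colResidual A k P
  set z := P *ᵥ U *ᵥ r
  have hproj : (U *ᵥ r - B *ᵥ z) ⬝ᵥ (B *ᵥ z) = 0 := by
    have h := sub_mul_mulVec_dotProduct_mulVec hMPM hsymm (U *ᵥ r) z
    rwa [← mulVec_mulVec] at h
  have hUB : (U *ᵥ r) ⬝ᵥ ((U * B) *ᵥ z) = 0 := by
    rw [← mulVec_mulVec, mulVec_dotProduct_mulVec_of_transpose_mul_eq_one hU,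
      colResidual_dotProduct_colDel_mulVec hMPM hsymm]
  calc ‖toLp 2 (B *ᵥ z)‖ ^ 2 = (U *ᵥ r) ⬝ᵥ ((B - U * B) *ᵥ z) := by
        rw [← dotProduct_self_eq_norm_sq, sub_mulVec, dotProduct_sub, hUB, sub_zero]
        rw [sub_dotProduct] at hproj
        linarith
    _ ≤ ‖toLp 2 r‖ * (frob (U * B - B) * ‖toLp 2 z‖) := by
        rw [← norm_mulVec_of_transpose_mul_eq_one hU r, frob_sub_rev]
        exact (dotProduct_le_norm_mul_norm _ _).trans
          (mul_le_mul_of_nonneg_left (norm_mulVec_le_frob_mul _ _) (norm_nonneg _))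

lemma norm_colDel_mulVec_le {U : Matrix (Fin d) (Fin d) ℝ} (hU : Uᵀ * U = 1)
    (hr : ‖toLp 2 (colResidual A k P)‖ ≤ √d * sigmaMin A) :
    ‖toLp 2 (colDel A k *ᵥ P *ᵥ U *ᵥ colResidual A k P)‖ ≤
      √d * frob (U * colDel A k - colDel A k) := by
  set x := colDel A k *ᵥ P *ᵥ U *ᵥ colResidual A k P
  set z := P *ᵥ U *ᵥ colResidual A k P
  set E := frob (U * colDel A k - colDel A k)
  have hz : sigmaMin A * ‖toLp 2 z‖ ≤ ‖toLp 2 x‖ := by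
    simpa using sigmaMin_mul_norm_le_colDel_mulVec_add A k z 0
  have hE : 0 ≤ E := frob_nonneg _
  have hσ := sigmaMin_nonneg A
  have hlin : ‖toLp 2 x‖ ^ 2 ≤ √d * E * ‖toLp 2 x‖ :=
    calc ‖toLp 2 x‖ ^ 2 ≤ ‖toLp 2 (colResidual A k P)‖ * (E * ‖toLp 2 z‖) :=
          norm_sq_colDel_mulVec_le hMPM hsymm hU
      _ ≤ √d * sigmaMin A * (E * ‖toLp 2 z‖) := by gcongr
      _ = √d * E * (sigmaMin A * ‖toLp 2 z‖) := by ring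
      _ ≤ √d * E * ‖toLp 2 x‖ := by gcongr
  nlinarith [norm_nonneg (toLp 2 x), mul_nonneg (Real.sqrt_nonneg d) hE]

lemma norm_colResidual_sub_le_or_norm_colResidual_add_le (hA : A.det ≠ 0)
    {U : Matrix (Fin d) (Fin d) ℝ} (hU : Uᵀ * U = 1) :
    ‖toLp 2 (colResidual A k P - U *ᵥ colResidual A k P)‖ ≤
        √2 * ‖toLp 2 (colDel A k *ᵥ P *ᵥ U *ᵥ colResidual A k P)‖ ∨
      ‖toLp 2 (colResidual A k P + U *ᵥ colResidual A k P)‖ ≤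
        √2 * ‖toLp 2 (colDel A k *ᵥ P *ᵥ U *ᵥ colResidual A k P)‖ := by
  obtain ⟨γ, hγ⟩ := exists_eq_smul_colResidual hMPM hsymm hA
    (sub_mul_mulVec_dotProduct_mulVec hMPM hsymm (U *ᵥ colResidual A k P))
  have hxr : ⟪toLp 2 (colDel A k *ᵥ P *ᵥ U *ᵥ colResidual A k P), toLp 2 (colResidual A k P)⟫
      = 0 := by
    rw [real_inner_toLp_toLp, dotProduct_comm]
    exact colResidual_dotProduct_colDel_mulVec hMPM hsymm _
  have hUr : toLp 2 (U *ᵥ colResidual A k P) =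
      toLp 2 (colDel A k *ᵥ P *ᵥ U *ᵥ colResidual A k P) + γ • toLp 2 (colResidual A k P) := by
    rw [← toLp_smul, ← toLp_add, ← hγ, ← mulVec_mulVec, add_sub_cancel]
  rw [toLp_sub, toLp_add]
  exact norm_sub_le_or_norm_add_le_of_eq_add_smul hxr hUr
    (norm_mulVec_of_transpose_mul_eq_one hU _)

end Residual

theorem stmt6 {d : ℕ} (A : Matrix (Fin d) (Fin d) ℝ) (hA : A.det ≠ 0)
    (k : Fin d) (P : Matrix {j : Fin d // j ≠ k} (Fin d) ℝ) (hP : IsMPInv (colDel A k) P)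
    (hk : frob (A - colDel A k * P * A) ≤ Real.sqrt d * sigmaMin A)
    (U : Matrix (Fin d) (Fin d) ℝ) (hU : Uᵀ * U = 1) :
    vnorm ((fun i => A i k) - U.mulVec (fun i => A i k)) ≤
        (1 + Real.sqrt 2) * Real.sqrt d * frob (U * colDel A k - colDel A k) ∨
    vnorm ((2 : ℝ) • (colDel A k * P).mulVec (fun i => A i k)
          - (fun i => A i k) - U.mulVec (fun i => A i k)) ≤
        (1 + Real.sqrt 2) * Real.sqrt d * frob (U * colDel A k - colDel A k) := by
  obtain ⟨hMPM, -, hsymm, -⟩ := hP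
  rw [frob_sub_colDel_mul_mul_eq_norm_colResidual hMPM] at hk
  have hx := norm_colDel_mulVec_le hMPM hsymm hU hk
  rw [frob_sub_rev] at hx
  simp only [vnorm_eq_norm]
  rw [frob_sub_rev (U * colDel A k), ← mulVec_mulVec]
  exact norm_sub_mulVec_le_or_norm_two_smul_sub_le (col_eq_colDel_mulVec_add_colResidual A k P)
    (norm_mulVec_col_le_sqrt hA hk) hx
    (norm_colResidual_sub_le_or_norm_colResidual_add_le hMPM hsymm hA hU)
end

section
/- Let A be a nonsingular d×d real matrix (d ≥ 2) and suppose the last column satisfies ‖A − A(d) A(d)⁺ A‖_F ≤ √d · σ_d(A), where A(d) is A with its d-th column removed. Then the vector v = A(d)⁺ A_{*,d} ∈ ℝ^{d−1} satisfies ‖v‖_2² ≤ d − 1. -/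
open scoped BigOperators Matrix

lemma sum_split_aux {d : ℕ} (k : Fin d) (f : Fin d → ℝ) :
    ∑ j, f j = f k + ∑ j : {j : Fin d // j ≠ k}, f j.1 := by
  rw [← Finset.sum_subtype (Finset.univ.erase k) (fun x => by simp) f]
  exact (Finset.add_sum_erase _ f (Finset.mem_univ k)).symm

theorem stmt7 {d : ℕ} (hd : 2 ≤ d) (A : Matrix (Fin d) (Fin d) ℝ) (hA : A.det ≠ 0)
    (k : Fin d) (hk : (k : ℕ) = d - 1)
    (P : Matrix {j : Fin d // j ≠ k} (Fin d) ℝ) (hP : IsMPInv (colDel A k) P)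
    (hbound : frob (A - colDel A k * P * A) ≤ Real.sqrt d * sigmaMin A) :
    ∑ j : {j : Fin d // j ≠ k}, (P.mulVec (fun i => A i k) j) ^ 2 ≤ (d : ℝ) - 1 := by
  classical
  set B := colDel A k with hB
  set v : {j : Fin d // j ≠ k} → ℝ := P.mulVec (fun i => A i k) with hv
  set s : ℝ := ∑ j, (v j) ^ 2 with hs
  have hs0 : 0 ≤ s := Finset.sum_nonneg fun _ _ => sq_nonneg _
  set r : Fin d → ℝ := fun i => A i k - B.mulVec v i with hr
  -- residual column k of A - B*P*A is r
  have hRk : ∀ i, (A - B * P * A) i k = r i := by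
    intro i
    have : (B * P * A) i k = B.mulVec v i := by
      simp only [hv, Matrix.mulVec, dotProduct, Matrix.mul_apply, Finset.mul_sum,
        Finset.sum_mul]
      rw [Finset.sum_comm]
      exact Finset.sum_congr rfl fun j _ => Finset.sum_congr rfl fun x _ => by ring
    simp [Matrix.sub_apply, this, hr]
  -- vnorm r ≤ frob residual
  have h1 : vnorm r ≤ frob (A - B * P * A) := by
    apply Real.sqrt_le_sqrt
    apply Finset.sum_le_sum
    intro i _
    calc (r i) ^ 2 = ((A - B * P * A) i k) ^ 2 := by rw [hRk]
      _ ≤ ∑ j, ((A - B * P * A) i j) ^ 2 :=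
        Finset.single_le_sum (f := fun j => ((A - B * P * A) i j) ^ 2)
          (fun j _ => sq_nonneg _) (Finset.mem_univ k)
  -- the vector w
  set w : Fin d → ℝ := fun j => if h : j = k then 1 else -(v ⟨j, h⟩) with hw
  have hwk : w k = 1 := by simp [hw]
  have hAw : A.mulVec w = r := by
    funext i
    show ∑ j, A i j * w j = r i
    rw [sum_split_aux k (fun j => A i j * w j)]
    have heq : ∀ j : {j : Fin d // j ≠ k}, A i j.1 * w j.1 = -(A i j.1 * v j) := by
      intro j; simp [hw, j.2]
    rw [Finset.sum_congr rfl (fun j _ => heq j), Finset.sum_neg_distrib]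
    simp [hr, hwk, Matrix.mulVec, dotProduct, hB, colDel, sub_eq_add_neg]
  have hwsum : ∑ j, (w j) ^ 2 = 1 + s := by
    rw [sum_split_aux k (fun j => (w j) ^ 2), hwk, one_pow]
    congr 1
    exact Finset.sum_congr rfl fun j _ => by simp [hw, j.2]
  set nw : ℝ := Real.sqrt (1 + s) with hnw
  have hnw2 : nw ^ 2 = 1 + s := Real.sq_sqrt (by linarith)
  have hnwpos : 0 < nw := Real.sqrt_pos.mpr (by linarith)
  -- unit vector u
  set u : Fin d → ℝ := fun j => w j / nw with hu
  have hu1 : vnorm u = 1 := by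
    have : ∑ j, (u j) ^ 2 = 1 := by
      simp only [hu, div_pow]
      rw [← Finset.sum_div, hwsum, ← hnw2, div_self (by positivity)]
    rw [vnorm, this, Real.sqrt_one]
  have hAu : vnorm (A.mulVec u) = vnorm r / nw := by
    have hmv : A.mulVec u = fun i => r i / nw := by
      have hsc : u = nw⁻¹ • w := by funext j; simp [hu, div_eq_inv_mul, smul_eq_mul]
      rw [hsc, Matrix.mulVec_smul, hAw]
      funext i; simp [div_eq_inv_mul, smul_eq_mul]
    rw [hmv, vnorm, vnorm]
    simp only [div_pow]
    rw [← Finset.sum_div]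
    rw [Real.sqrt_div (Finset.sum_nonneg fun _ _ => sq_nonneg _), Real.sqrt_sq hnwpos.le]
  -- properties of sigmaMin
  have hbdd : BddBelow {x : ℝ | ∃ v : Fin d → ℝ, vnorm v = 1 ∧ x = vnorm (A.mulVec v)} := by
    refine ⟨0, fun x hx => ?_⟩
    obtain ⟨v0, -, hx⟩ := hx
    rw [hx]; exact Real.sqrt_nonneg _
  have hmem : vnorm r / nw ∈
      {x : ℝ | ∃ v : Fin d → ℝ, vnorm v = 1 ∧ x = vnorm (A.mulVec v)} :=
    ⟨u, hu1, hAu.symm⟩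
  have hsle : sigmaMin A ≤ vnorm r / nw := csInf_le hbdd hmem
  have hs0' : 0 ≤ sigmaMin A := by
    refine le_csInf ⟨vnorm (A.mulVec u), ⟨u, hu1, rfl⟩⟩ ?_
    rintro x ⟨v0, -, hx⟩
    rw [hx]; exact Real.sqrt_nonneg _
  have hchain : sigmaMin A * nw ≤ Real.sqrt d * sigmaMin A := by
    have h2 : sigmaMin A * nw ≤ vnorm r := (le_div_iff₀ hnwpos).mp hsle
    exact h2.trans (h1.trans hbound)
  rcases eq_or_lt_of_le hs0' with hz | hpos
  · -- sigmaMin A = 0 : contradiction with det ≠ 0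
    exfalso
    have hr0 : vnorm r = 0 := by
      have : vnorm r ≤ 0 := by
        have := h1.trans hbound
        rw [← hz] at this; simpa using this
      exact le_antisymm this (Real.sqrt_nonneg _)
    have hsum0 : ∑ a, (r a) ^ 2 = 0 := by
      have := (Real.sqrt_eq_zero (Finset.sum_nonneg fun _ _ => sq_nonneg _)).mp hr0
      exact this
    have hrz : r = 0 := by
      funext i
      have h0 : (r i) ^ 2 = 0 := by
        have := Finset.sum_eq_zero_iff_of_nonneg (fun j (_ : j ∈ Finset.univ) =>
          sq_nonneg (r j))
        exact (this.mp hsum0) i (Finset.mem_univ i)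
      exact pow_eq_zero_iff (n := 2) (by norm_num) |>.mp h0
    have hw0 : w = 0 := Matrix.eq_zero_of_mulVec_eq_zero hA (by rw [hAw, hrz])
    have : (1 : ℝ) = 0 := by rw [← hwk, hw0]; rfl
    norm_num at this
  · -- sigmaMin A > 0
    have hnwle : nw ≤ Real.sqrt d := by
      have := hchain
      rw [mul_comm (Real.sqrt d) (sigmaMin A)] at this
      exact le_of_mul_le_mul_left (by linarith [this]) hpos
    have hle : (1 : ℝ) + s ≤ d := by
      have := mul_self_le_mul_self hnwpos.le hnwle
      have hd0 : (0 : ℝ) ≤ d := Nat.cast_nonneg d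
      calc (1 : ℝ) + s = nw * nw := by rw [← hnw2]; ring
        _ ≤ Real.sqrt d * Real.sqrt d := this
        _ = d := Real.mul_self_sqrt hd0
    linarith
end
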